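/- Let p ∈ {1,…,6} and let σ = {p, p+1, p+2}, with entries reduced mod 6 to representatives in {1,…,6}. Then the projection pr^G_{α_σ} of G onto the coordinates α_σ restricts to a group isomorphism of the standard face subgroup G^σ onto ∏_{i∈α_σ} G_i; in particular G^σ is isomorphic to ∏_{i∈α_σ} G_i. -/

import Mathlib

namespace SB

/-- `cc n p` is the 0-based boundary of the `p`-th label sequence:
`cc n p = ⌈p·n/3⌉` for `p ≤ 3`, and `cc n p = n + ⌈(p-3)·n/3⌉` for `p ≥ 3`. -/
def cc (n p : ℕ) : ℕ := if p < 3 then (p * n + 2) / 3 else n + ((p - 3) * n + 2) / 3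

/-- The 0-based label sequence `α_{p+1}` (paper's `α_1,…,α_6` for `p = 0,…,5`)
as a finite set of coordinates in `Fin (2n)`. -/
def alphaF (n p : ℕ) : Finset (Fin (2 * n)) :=
  Finset.univ.filter (fun x => cc n p ≤ x.val ∧ x.val < cc n (p + 1))

/-- The 0-based label sequence `α_{t+1}` (for `t < 3`) as a finite set of
indices in `Fin n` (indexing the factors `A_j`). -/
def alphaN (n t : ℕ) : Finset (Fin n) :=
  Finset.univ.filter (fun x => cc n t ≤ x.val ∧ x.val < cc n (t + 1))

/-- Reduction of a natural number modulo `2n`, as an element of `Fin (2n)`. -/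
def idx {n : ℕ} (hn : 0 < n) (k : ℕ) : Fin (2 * n) := ⟨k % (2 * n), Nat.mod_lt _ (by omega)⟩

/-- Reduction of a natural number modulo `n`, as an element of `Fin n`
(this implements the paper's `j*`). -/
def idxN {n : ℕ} (hn : 0 < n) (k : ℕ) : Fin n := ⟨k % n, Nat.mod_lt _ hn⟩

/-- The set `Ȳ_i` of vectorized kernel generators: `y ∈ Y i` placed in
coordinate `i` with identity elsewhere. -/
def Ybar {n : ℕ} {G : Fin (2 * n) → Type} [∀ i, Group (G i)]
    (Y : ∀ i, Set (G i)) (i : Fin (2 * n)) : Set (∀ i', G i') :=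
  Pi.mulSingle i '' (Y i)

/-- The set `Z̄^j_{i,k}` of vectorized section generators: for `b ∈ A j`, the
element with `s j i b` in coordinate `i`, `s j k b⁻¹` in coordinate `k`, and
identity elsewhere. -/
def Zbar {n : ℕ} {A : Fin n → Type} [∀ j, CommGroup (A j)]
    {G : Fin (2 * n) → Type} [∀ i, Group (G i)]
    (s : ∀ (j : Fin n) (i : Fin (2 * n)), A j →* G i)
    (j : Fin n) (i k : Fin (2 * n)) : Set (∀ i', G i') :=
  Set.range (fun b : A j => Pi.mulSingle i (s j i b) * Pi.mulSingle k (s j k b⁻¹))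


/-!
Restriction to the coordinates `S = α_σ` is onto: the generators `Ȳᵢ` and `Z̄^{j*}_{i,j}` restrict
to `Yᵢ` and to the sections `sᵏᵢ(b)` in coordinate `i`, and every `k` is `j*` for some `j ∉ S`.

It is injective because the coordinates outside `S` are determined by those in `S`. The
endomorphism `a ↦ ∏ₖ φᵢ(sᵏᵢ(aₖ))` of `L` is onto (the `Yᵢ` lie in `Ker φᵢ`), hence invertible as
`L` is a finitely generated abelian group; with `ψᵢ` its inverse, every generator `g` satisfies
`g_l = s^{l*}_l ((∏_{i ∈ S} ψᵢ(φᵢ(gᵢ)))_{l*})⁻¹` for `l ∉ S`, using that `j ↦ j*` is injective on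
the complement of `S`. Both sides are homomorphisms in `g`, so the identity holds on the whole
face subgroup.
-/

open Function Set

instance {κ : Type*} [Finite κ] (A : κ → Type*) [∀ k, CommGroup (A k)]
    [∀ k, Module.Finite ℤ (Additive (A k))] : Module.Finite ℤ (Additive (∀ k, A k)) :=
  Module.Finite.equiv (AddEquiv.piAdditive A).symm.toIntLinearEquiv

theorem MonoidHom.injective_of_surjective_of_fg {M : Type*} [CommGroup M]
    [Module.Finite ℤ (Additive M)] {f : M →* M} (hf : Surjective f) : Injective f :=
  OrzechProperty.injective_of_surjective_endomorphism f.toAdditive.toIntLinearMap hf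

section SectionEndo

variable {ι κ : Type*} [Fintype κ] [DecidableEq κ]
  {A : κ → Type*} [∀ k, CommGroup (A k)] {G : ι → Type*} [∀ i, Group (G i)]
  (φ : ∀ i, G i →* ∀ k, A k) (s : ∀ k i, A k →* G i)

/-- `a ↦ ∏ₖ φᵢ (sᵏᵢ (aₖ))` -/
def sectionEndo (i : ι) : (∀ k, A k) →* (∀ k, A k) :=
  (Pi.monoidHomMulEquiv A (∀ k, A k)).symm fun k => (φ i).comp (s k i)

theorem sectionEndo_mulSingle (i : ι) (k : κ) (b : A k) :
    sectionEndo φ s i (Pi.mulSingle k b) = φ i (s k i b) :=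
  DFunLike.congr_fun (congr_fun ((Pi.monoidHomMulEquiv A _).apply_symm_apply _) k) b

theorem sectionEndo_surjective {i : ι} {Y : Set (G i)} (hφ : Surjective (φ i))
    (hY : ∀ y ∈ Y, φ i y = 1) (hgen : Subgroup.closure (Y ∪ ⋃ k, range (s k i)) = ⊤) :
    Surjective (sectionEndo φ s i) := by
  rw [← MonoidHom.range_eq_top, eq_top_iff, ← MonoidHom.range_eq_top.mpr hφ,
    MonoidHom.range_eq_map, ← hgen, MonoidHom.map_closure, Subgroup.closure_le]
  rintro _ ⟨g, hY' | ⟨_, ⟨k, rfl⟩, b, rfl⟩, rfl⟩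
  · rw [SetLike.mem_coe, hY g hY']
    exact one_mem _
  · exact ⟨Pi.mulSingle k b, sectionEndo_mulSingle φ s i k b⟩

theorem exists_retraction_sections [∀ k, Module.Finite ℤ (Additive (A k))]
    {Y : ∀ i, Set (G i)} (hφ : ∀ i, Surjective (φ i)) (hY : ∀ i, ∀ y ∈ Y i, φ i y = 1)
    (hgen : ∀ i, Subgroup.closure (Y i ∪ ⋃ k, range (s k i)) = ⊤) :
    ∃ ψ : ∀ _ : ι, (∀ k, A k) →* (∀ k, A k),
      ∀ i k b, ψ i (φ i (s k i b)) = Pi.mulSingle k b := by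
  have hsurj i := sectionEndo_surjective φ s (hφ i) (hY i) (hgen i)
  let e i := MulEquiv.ofBijective _ ⟨MonoidHom.injective_of_surjective_of_fg (hsurj i), hsurj i⟩
  refine ⟨fun i => (e i).symm.toMonoidHom, fun i k b => ?_⟩
  rw [← sectionEndo_mulSingle]
  exact (e i).symm_apply_apply _

end SectionEndo

section FaceSubgroup

variable {ι κ : Type*} {A : κ → Type*} [∀ k, CommGroup (A k)] {G : ι → Type*} [∀ i, Group (G i)]
  (φ : ∀ i, G i →* ∀ k, A k) (s : ∀ k i, A k →* G i) (ψ : ∀ _ : ι, (∀ k, A k) →* (∀ k, A k))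
  (τ : ι → κ) (S : Finset ι)

def restrictHom : (∀ i, G i) →* (∀ i : S, G i) :=
  MonoidHom.pi fun i => Pi.evalMonoidHom G i

def faceWeight : (∀ i, G i) →* (∀ k, A k) :=
  ∏ i ∈ S, (ψ i).comp ((φ i).comp (Pi.evalMonoidHom G i))

variable {S}

theorem faceWeight_apply (g : ∀ i, G i) : faceWeight φ ψ S g = ∏ i ∈ S, ψ i (φ i (g i)) := by
  simp [faceWeight]

variable [DecidableEq ι]

variable (S) in
def faceProjection : (∀ i, G i) →* (∀ i, G i) :=
  MonoidHom.pi fun l => if l ∈ S then Pi.evalMonoidHom G l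
    else (s (τ l) l).comp ((Pi.evalMonoidHom A (τ l)).comp (faceWeight φ ψ S))⁻¹

theorem faceProjection_apply (g : ∀ i, G i) (l : ι) :
    faceProjection φ s ψ τ S g l =
      if l ∈ S then g l else s (τ l) l (faceWeight φ ψ S g (τ l))⁻¹ := by
  simp only [faceProjection, MonoidHom.pi_apply]
  split_ifs <;> rfl

theorem faceProjection_eq_one {x : ∀ i, G i} (hx : ∀ i ∈ S, x i = 1) :
    faceProjection φ s ψ τ S x = 1 := by
  have hweight : faceWeight φ ψ S x = 1 := by
    rw [faceWeight_apply]
    exact Finset.prod_eq_one fun i hi => by rw [hx i hi, map_one, map_one]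
  funext l
  rw [faceProjection_apply, hweight]
  split_ifs with hl
  · exact hx l hl
  · rw [Pi.one_apply, inv_one, map_one, Pi.one_apply]

theorem faceProjection_eq_self {g : ∀ i, G i}
    (h : ∀ l ∉ S, s (τ l) l (faceWeight φ ψ S g (τ l))⁻¹ = g l) :
    faceProjection φ s ψ τ S g = g := by
  funext l
  rw [faceProjection_apply]
  split_ifs with hl
  · rfl
  · exact h l hl

theorem restrictHom_mulSingle_of_mem {i : ι} (hi : i ∈ S) (g : G i) :
    restrictHom S (Pi.mulSingle i g) = Pi.mulSingle (⟨i, hi⟩ : S) g := by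
  funext l
  by_cases hl : l = ⟨i, hi⟩
  · subst hl
    rw [Pi.mulSingle_eq_same]
    exact Pi.mulSingle_eq_same i g
  · rw [Pi.mulSingle_eq_of_ne hl]
    exact Pi.mulSingle_eq_of_ne (fun h => hl (Subtype.ext h)) _

theorem restrictHom_mulSingle_of_notMem {j : ι} (hj : j ∉ S) (g : G j) :
    restrictHom S (Pi.mulSingle j g) = 1 :=
  funext fun l => Pi.mulSingle_eq_of_ne (ne_of_mem_of_not_mem l.2 hj) _

theorem faceWeight_mulSingle_of_mem {i : ι} (hi : i ∈ S) (g : G i) :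
    faceWeight φ ψ S (Pi.mulSingle i g) = ψ i (φ i g) := by
  rw [faceWeight_apply, Finset.prod_eq_single_of_mem i hi, Pi.mulSingle_eq_same]
  intro l _ hl
  rw [Pi.mulSingle_eq_of_ne hl, map_one, map_one]

theorem faceWeight_mulSingle_of_notMem {j : ι} (hj : j ∉ S) (g : G j) :
    faceWeight φ ψ S (Pi.mulSingle j g) = 1 := by
  rw [faceWeight_apply]
  refine Finset.prod_eq_one fun l hl => ?_
  rw [Pi.mulSingle_eq_of_ne (ne_of_mem_of_not_mem hl hj), map_one, map_one]

variable [Fintype ι] (Y : ∀ i, Set (G i))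

variable (S) in
def faceGenerators : Set (∀ i, G i) :=
  ⋃ i ∈ S, (Pi.mulSingle i '' Y i ∪ ⋃ j ∈ Sᶜ,
    range fun b : A (τ j) => Pi.mulSingle i (s (τ j) i b) * Pi.mulSingle j (s (τ j) j b⁻¹))

theorem faceProjection_eqOn_faceGenerators [DecidableEq κ]
    (hψ : ∀ i k b, ψ i (φ i (s k i b)) = Pi.mulSingle k b) (hY : ∀ i, ∀ y ∈ Y i, φ i y = 1)
    (hτ : InjOn τ (↑S)ᶜ) :
    EqOn (faceProjection φ s ψ τ S) (MonoidHom.id _) (faceGenerators s τ S Y) := by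
  intro g hg
  simp only [faceGenerators, mem_iUnion, mem_union, mem_image, mem_range] at hg
  obtain ⟨i, hi, ⟨y, hy, rfl⟩ | ⟨j, hj, b, rfl⟩⟩ := hg
  · refine faceProjection_eq_self φ s ψ τ fun l hl => ?_
    have hli : l ≠ i := (ne_of_mem_of_not_mem hi hl).symm
    rw [faceWeight_mulSingle_of_mem φ ψ hi, hY i y hy, map_one, Pi.one_apply, inv_one, map_one,
      Pi.mulSingle_eq_of_ne hli]
  · rw [Finset.mem_compl] at hj
    refine faceProjection_eq_self φ s ψ τ fun l hl => ?_
    have hli : l ≠ i := (ne_of_mem_of_not_mem hi hl).symm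
    rw [map_mul, faceWeight_mulSingle_of_mem φ ψ hi, faceWeight_mulSingle_of_notMem φ ψ hj,
      mul_one, hψ, Pi.mul_apply, Pi.mulSingle_eq_of_ne hli, one_mul]
    by_cases hlj : l = j
    · subst hlj
      rw [Pi.mulSingle_eq_same, Pi.mulSingle_eq_same, map_inv]
    · have hτl : τ l ≠ τ j := fun h => hlj (hτ hl hj h)
      rw [Pi.mulSingle_eq_of_ne hτl, Pi.mulSingle_eq_of_ne hlj, inv_one, map_one]

theorem eq_one_of_restrictHom_eq_one [DecidableEq κ]
    (hψ : ∀ i k b, ψ i (φ i (s k i b)) = Pi.mulSingle k b) (hY : ∀ i, ∀ y ∈ Y i, φ i y = 1)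
    (hτ : InjOn τ (↑S)ᶜ) {x : ∀ i, G i} (hx : x ∈ Subgroup.closure (faceGenerators s τ S Y))
    (hx1 : restrictHom S x = 1) : x = 1 :=
  calc x = faceProjection φ s ψ τ S x :=
        (MonoidHom.eqOn_closure (faceProjection_eqOn_faceGenerators φ s ψ τ Y hψ hY hτ) hx).symm
    _ = 1 := faceProjection_eq_one φ s ψ τ fun i hi => congr_fun hx1 ⟨i, hi⟩

theorem map_restrictHom_closure_faceGenerators
    (hgen : ∀ i, Subgroup.closure (Y i ∪ ⋃ k, range (s k i)) = ⊤) (hτ : SurjOn τ (↑S)ᶜ univ) :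
    (Subgroup.closure (faceGenerators s τ S Y)).map (restrictHom S) = ⊤ := by
  refine (Subgroup.eq_top_iff' _).mpr fun u => Subgroup.pi_mem_of_mulSingle_mem u fun ⟨i, hi⟩ => ?_
  suffices hle : ⊤ ≤ ((Subgroup.closure (faceGenerators s τ S Y)).map (restrictHom S)).comap
      (MonoidHom.mulSingle _ (⟨i, hi⟩ : S)) from hle (Subgroup.mem_top _)
  rw [← hgen i, Subgroup.closure_le]
  rintro g (hy | ⟨_, ⟨k, rfl⟩, b, rfl⟩)
  · refine ⟨Pi.mulSingle i g, Subgroup.subset_closure ?_, restrictHom_mulSingle_of_mem hi g⟩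
    exact mem_biUnion hi (Or.inl (mem_image_of_mem _ hy))
  · obtain ⟨j, hj, rfl⟩ := hτ (mem_univ k)
    refine ⟨_, Subgroup.subset_closure (mem_biUnion hi (Or.inr
      (mem_biUnion (Finset.mem_compl.mpr hj) (mem_range_self b)))), ?_⟩
    rw [map_mul, restrictHom_mulSingle_of_mem hi, restrictHom_mulSingle_of_notMem hj, mul_one]
    rfl

theorem exists_mulEquiv_closure_faceGenerators [Fintype κ] [DecidableEq κ]
    [∀ k, Module.Finite ℤ (Additive (A k))] (hφ : ∀ i, Surjective (φ i))
    (hY : ∀ i, ∀ y ∈ Y i, φ i y = 1)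
    (hgen : ∀ i, Subgroup.closure (Y i ∪ ⋃ k, range (s k i)) = ⊤) (hτ : BijOn τ (↑S)ᶜ univ) :
    ∃ e : Subgroup.closure (faceGenerators s τ S Y) ≃* (∀ i : S, G i),
      ∀ x i, e x i = (x : ∀ i, G i) i := by
  obtain ⟨ψ, hψ⟩ := exists_retraction_sections φ s hφ hY hgen
  let f := (restrictHom S).comp (Subgroup.closure (faceGenerators s τ S Y)).subtype
  have hinj : Injective f := (injective_iff_map_eq_one f).mpr fun x hx =>
    Subtype.ext (eq_one_of_restrictHom_eq_one φ s ψ τ Y hψ hY hτ.injOn x.2 hx)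
  have hsurj : Surjective f := by
    rw [← MonoidHom.range_eq_top, MonoidHom.range_comp, Subgroup.range_subtype]
    exact map_restrictHom_closure_faceGenerators s τ Y hgen hτ.surjOn
  exact ⟨MulEquiv.ofBijective f ⟨hinj, hsurj⟩, fun _ _ => rfl⟩

end FaceSubgroup

section Labels

def faceCoords (n p : ℕ) : Finset (Fin (2 * n)) :=
  alphaF n p ∪ alphaF n ((p + 1) % 6) ∪ alphaF n ((p + 2) % 6)

/-- `σ = {p, p+1, p+2}` contains exactly one of `t` and `t + 3` (mod 6), and `α_{t+3} = α_t + n`. -/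
theorem mem_faceCoords_iff_notMem {n p : ℕ} (hn : 3 ≤ n) (hp : p < 6) {x y : Fin (2 * n)}
    (hxy : (y : ℕ) = x + n) : x ∈ faceCoords n p ↔ y ∉ faceCoords n p := by
  simp only [faceCoords, alphaF, cc, Finset.mem_union]
  interval_cases p <;> norm_num <;> omega

theorem bijOn_idxN_compl_faceCoords {n p : ℕ} (hn : 3 ≤ n) (hp : p < 6) (hn0 : 0 < n) :
    BijOn (fun j : Fin (2 * n) => idxN hn0 j) (↑(faceCoords n p))ᶜ univ := by
  have hmod (j : Fin (2 * n)) : (j : ℕ) % n = j ∨ (j : ℕ) % n + n = j := by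
    rcases lt_or_ge (j : ℕ) n with hj | hj
    · exact Or.inl (Nat.mod_eq_of_lt hj)
    · rw [Nat.mod_eq_sub_mod hj, Nat.mod_eq_of_lt (by omega)]
      exact Or.inr (by omega)
  refine ⟨mapsTo_univ _ _, fun j₁ hj₁ j₂ hj₂ h => ?_, fun k _ => ?_⟩
  · have h' : (j₁ : ℕ) % n = j₂ % n := congrArg Fin.val h
    have hnot {x y : Fin (2 * n)} (hxy : (y : ℕ) = x + n) (hx : x ∉ faceCoords n p)
        (hy : y ∉ faceCoords n p) : False :=
      hx ((mem_faceCoords_iff_notMem hn hp hxy).mpr hy)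
    rcases hmod j₁ with h₁ | h₁ <;> rcases hmod j₂ with h₂ | h₂
    · exact Fin.ext (by omega)
    · exact (hnot (by omega) hj₁ hj₂).elim
    · exact (hnot (by omega) hj₂ hj₁).elim
    · exact Fin.ext (by omega)
  · have hk := k.isLt
    by_cases hmem : (⟨k, by omega⟩ : Fin (2 * n)) ∈ faceCoords n p
    · refine ⟨⟨k + n, by omega⟩, (mem_faceCoords_iff_notMem hn hp rfl).mp hmem, ?_⟩
      exact Fin.ext (by simp [idxN, Nat.mod_eq_of_lt hk])
    · exact ⟨⟨k, by omega⟩, hmem, Fin.ext (Nat.mod_eq_of_lt hk)⟩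

end Labels

theorem stmt_4
    (n : ℕ) (hn : 3 ≤ n)
    (A : Fin n → Type) [∀ j, CommGroup (A j)]
    [∀ j, Module.Finite ℤ (Additive (A j))]
    (G : Fin (2 * n) → Type) [∀ i, Group (G i)]
    (φ : ∀ i, G i →* (∀ j, A j)) (hφ : ∀ i, Function.Surjective (φ i))
    (s : ∀ (j : Fin n) (i : Fin (2 * n)), A j →* G i)
    (Y : ∀ i, Set (G i))
    (hYker : ∀ i, ∀ y ∈ Y i, φ i y = 1)
    (hYgen : ∀ i, Subgroup.closure (Y i ∪ ⋃ j, Set.range (s j i)) = ⊤)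
    (p : ℕ) (hp : p < 6) :
    ∃ e : ↥(Subgroup.closure (⋃ i ∈ (alphaF n p ∪ alphaF n ((p + 1) % 6) ∪ alphaF n ((p + 2) % 6)),
            (Ybar Y i ∪ ⋃ j ∈ (alphaF n p ∪ alphaF n ((p + 1) % 6) ∪ alphaF n ((p + 2) % 6))ᶜ,
              Zbar s (idxN (by omega : 0 < n) j.val) i j)))
          ≃* (∀ i : ↥(alphaF n p ∪ alphaF n ((p + 1) % 6) ∪ alphaF n ((p + 2) % 6)), G i.1),
      ∀ x (i : ↥(alphaF n p ∪ alphaF n ((p + 1) % 6) ∪ alphaF n ((p + 2) % 6))),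
        e x i = (x : ∀ i', G i') i.1 :=
  exists_mulEquiv_closure_faceGenerators φ s _ Y hφ hYker hYgen
    (bijOn_idxN_compl_faceCoords hn hp (by omega))

end SB
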